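/- arXiv:math/0605124 — 2 statements merged into one kernel-verified Lean document; each statement's English description precedes it below -/
import Mathlib

section
/- For all real numbers x, y with x > 0, y > 1, and x + y ≠ 0, setting f = (2xy - x + y)/(x + y), if f > 1 then ln((x+1)/x) + ln(y/(y-1)) + ln((f-1)/(f+1)) = 0. -/
theorem stmt_0 (x y : ℝ) (hx : x > 0) (hy : y > 1) (hxy : x + y ≠ 0) :
    let f := (2*x*y - x + y) / (x + y)
    f > 1 →
      Real.log ((x+1)/x) + Real.log (y/(y-1)) + Real.log ((f-1)/(f+1)) = 0 := by
  intro f hf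
  have h1 : (x+1)/x > 0 := by positivity
  have h2 : y/(y-1) > 0 := div_pos (by linarith) (by linarith)
  have hf1 : f + 1 > 0 := by linarith
  have h3 : (f-1)/(f+1) > 0 := div_pos (by linarith) hf1
  rw [← Real.log_mul (ne_of_gt h1) (ne_of_gt h2),
      ← Real.log_mul (ne_of_gt (mul_pos h1 h2)) (ne_of_gt h3)]
  have : (x+1)/x * (y/(y-1)) * ((f-1)/(f+1)) = 1 := by
    have hxyp : x + y > 0 := by linarith
    have hfm : f - 1 = 2*x*(y-1)/(x+y) := by
      show (2*x*y - x + y)/(x+y) - 1 = _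
      field_simp
      ring
    have hfp : f + 1 = 2*y*(x+1)/(x+y) := by
      show (2*x*y - x + y)/(x+y) + 1 = _
      field_simp
      ring
    rw [hfm, hfp]
    have hy1 : y - 1 ≠ 0 := by linarith
    have hx1 : x + 1 ≠ 0 := by linarith
    field_simp
  rw [this, Real.log_one]
end

section
/- Define the Rogers dilogarithm D₂(t) = -(1/2)·∫₀ᵗ ( log(1-s)/s + log(s)/(1-s) ) ds - π²/6 for 0 < t < 1. Then for all real x, y with 0 < x < y < 1: D₂(x) - D₂(y) - D₂(x/y) - D₂((1-y)/(1-x)) + D₂(x(1-y)/(y(1-x))) = 0. -/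
noncomputable def D2 (t : ℝ) : ℝ :=
  -(1/2) * (∫ s in (0:ℝ)..t, (Real.log (1 - s) / s + Real.log s / (1 - s))) - Real.pi^2 / 6

/-!
Fix `x` and regard the left-hand side as a function of `y ∈ [x, 1]`. All five arguments stay in
`[0, 1]`, where `D2` is continuous, and on `(x, 1)` the derivative vanishes: `D2'` is
`-½ (log (1 - t) / t + log t / (1 - t))`, and once the logarithms of the five arguments are
expanded in `log x, log y, log (1 - x), log (1 - y), log (y - x)`, the chain-rule terms cancel.
So the expression equals its value at `y = 1`, namely `-D2 1`. Finally `D2 1 = 0` because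
`∫₀¹ log (1 - s) / s ds = -ζ(2) = -π²/6` (integrate `-log (1 - s) / s = ∑ sⁿ / (n + 1)` termwise),
and `s ↦ 1 - s` turns the other half of the integrand into the same integral.
-/

open Real MeasureTheory Set

lemma hasSum_pow_div_succ {s : ℝ} (hs : |s| < 1) (hs0 : s ≠ 0) :
    HasSum (fun n : ℕ => s ^ n / (n + 1)) (-log (1 - s) / s) := by
  have h := (hasSum_pow_div_log_of_abs_lt_one hs).div_const s
  have hterm (n : ℕ) : s ^ (n + 1) / (n + 1) / s = s ^ n / (n + 1) := by
    field_simp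
    ring
  simpa only [hterm] using h

lemma hasSum_one_div_succ_sq : HasSum (fun n : ℕ => 1 / ((n : ℝ) + 1) ^ 2) (π ^ 2 / 6) := by
  simpa using (hasSum_nat_add_iff' 1).2 hasSum_zeta_two

lemma integral_neg_log_one_sub_div : ∫ s in (0:ℝ)..1, -log (1 - s) / s = π ^ 2 / 6 := by
  let μ := volume.restrict (Ioo (0:ℝ) 1)
  have hterm (n : ℕ) : ∫ s, s ^ n / (n + 1) ∂μ = 1 / ((n : ℝ) + 1) ^ 2 := by
    rw [← integral_Ioc_eq_integral_Ioo, ← intervalIntegral.integral_of_le zero_le_one,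
      intervalIntegral.integral_div, integral_pow]
    field_simp
    ring
  have hint (n : ℕ) : Integrable (fun s : ℝ => s ^ n / (n + 1)) μ :=
    ((continuous_pow n).div_const _).integrableOn_Icc.mono_set Ioo_subset_Icc_self
  have hnorm (n : ℕ) : ∫ s, ‖s ^ n / (n + 1)‖ ∂μ = ∫ s, s ^ n / (n + 1) ∂μ :=
    setIntegral_congr_fun measurableSet_Ioo fun s hs =>
      Real.norm_of_nonneg (by have := hs.1.le; positivity)
  have hsum := hasSum_integral_of_summable_integral_norm hint
    (by simpa only [hnorm, hterm] using hasSum_one_div_succ_sq.summable)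
  rw [funext hterm] at hsum
  rw [intervalIntegral.integral_of_le zero_le_one, integral_Ioc_eq_integral_Ioo,
    hasSum_one_div_succ_sq.unique hsum]
  refine setIntegral_congr_fun measurableSet_Ioo fun s hs => ?_
  exact (hasSum_pow_div_succ (by rw [abs_of_pos hs.1]; exact hs.2) hs.1.ne').tsum_eq.symm

lemma intervalIntegrable_log_one_sub_div :
    IntervalIntegrable (fun s => log (1 - s) / s) volume 0 1 := by
  -- a non-integrable function would have integral `0`
  have := intervalIntegral.intervalIntegrable_of_integral_ne_zero
    (integral_neg_log_one_sub_div.trans_ne (by positivity))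
  convert this.neg using 1
  funext s
  simp [neg_div]

lemma integral_log_one_sub_div : ∫ s in (0:ℝ)..1, log (1 - s) / s = -(π ^ 2 / 6) := by
  simp only [← integral_neg_log_one_sub_div, neg_div, intervalIntegral.integral_neg, neg_neg]

lemma intervalIntegrable_log_div_one_sub :
    IntervalIntegrable (fun s => log s / (1 - s)) volume 0 1 := by
  simpa using (intervalIntegrable_log_one_sub_div.comp_sub_left 1).symm

lemma integral_log_div_one_sub : ∫ s in (0:ℝ)..1, log s / (1 - s) = -(π ^ 2 / 6) := by
  simpa [integral_log_one_sub_div] using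
    intervalIntegral.integral_comp_sub_left (fun s => log (1 - s) / s) (a := 0) (b := 1) 1

noncomputable def rogersIntegrand (s : ℝ) : ℝ := log (1 - s) / s + log s / (1 - s)

lemma intervalIntegrable_rogersIntegrand : IntervalIntegrable rogersIntegrand volume 0 1 :=
  intervalIntegrable_log_one_sub_div.add intervalIntegrable_log_div_one_sub

lemma continuousOn_rogersIntegrand : ContinuousOn rogersIntegrand (Ioo 0 1) := by
  intro t ⟨h0, h1⟩
  have h1' : 1 - t ≠ 0 := by linarith
  refine ContinuousAt.continuousWithinAt ?_
  exact (((continuousAt_const.sub continuousAt_id).log h1').div continuousAt_id h0.ne').add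
    ((continuousAt_id.log h0.ne').div (continuousAt_const.sub continuousAt_id) h1')

lemma D2_one : D2 1 = 0 := by
  rw [D2, intervalIntegral.integral_add
    intervalIntegrable_log_one_sub_div intervalIntegrable_log_div_one_sub,
    integral_log_one_sub_div, integral_log_div_one_sub]
  ring

lemma continuousOn_D2 : ContinuousOn D2 (Icc 0 1) := by
  have h := intervalIntegral.continuousOn_primitive_interval' intervalIntegrable_rogersIntegrand
    left_mem_uIcc
  rw [uIcc_of_le zero_le_one] at h
  exact (continuousOn_const.mul h).sub continuousOn_const

lemma hasDerivAt_D2 {t : ℝ} (h0 : 0 < t) (h1 : t < 1) :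
    HasDerivAt D2 (-(1 / 2) * rogersIntegrand t) t := by
  have hint : IntervalIntegrable rogersIntegrand volume 0 t :=
    intervalIntegrable_rogersIntegrand.mono_set (by
      rw [uIcc_of_le h0.le, uIcc_of_le zero_le_one]
      exact Icc_subset_Icc_right h1.le)
  have hcont := continuousOn_rogersIntegrand.continuousAt (Ioo_mem_nhds h0 h1)
  have hmeas := continuousOn_rogersIntegrand.stronglyMeasurableAtFilter (μ := volume)
    isOpen_Ioo t ⟨h0, h1⟩
  exact ((intervalIntegral.integral_hasDerivAt_right hint hmeas hcont).const_mul _).sub_const _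

lemma rogersIntegrand_five_term {x z : ℝ} (hx : 0 < x) (hxz : x < z) (hz : z < 1) :
    rogersIntegrand z = x / z ^ 2 * rogersIntegrand (x / z)
      + rogersIntegrand ((1 - z) / (1 - x)) / (1 - x)
      - x / (z ^ 2 * (1 - x)) * rogersIntegrand (x * (1 - z) / (z * (1 - x))) := by
  have hz0 : 0 < z := hx.trans hxz
  have h1x : 0 < 1 - x := by linarith
  have h1z : 0 < 1 - z := by linarith
  have hzx : 0 < z - x := by linarith
  have e1 : 1 - x / z = (z - x) / z := by field_simp
  have e2 : 1 - (1 - z) / (1 - x) = (z - x) / (1 - x) := by field_simp; ring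
  have e3 : 1 - x * (1 - z) / (z * (1 - x)) = (z - x) / (z * (1 - x)) := by field_simp; ring
  simp only [rogersIntegrand]
  rw [e1, e2, e3, log_div hzx.ne' hz0.ne', log_div hx.ne' hz0.ne', log_div hzx.ne' h1x.ne',
    log_div h1z.ne' h1x.ne', log_div hzx.ne' (by positivity),
    log_div (by positivity) (by positivity),
    log_mul hx.ne' h1z.ne', log_mul hz0.ne' h1x.ne']
  field_simp
  ring

noncomputable def abelFiveTerm (x z : ℝ) : ℝ :=
  D2 x - D2 z - D2 (x / z) - D2 ((1 - z) / (1 - x)) + D2 (x * (1 - z) / (z * (1 - x)))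

lemma abelFiveTerm_one (x : ℝ) : abelFiveTerm x 1 = 0 := by
  simp [abelFiveTerm, D2_one]

lemma continuousOn_abelFiveTerm {x : ℝ} (hx : 0 < x) (hx1 : x < 1) :
    ContinuousOn (abelFiveTerm x) (Icc x 1) := by
  have h1x : 0 < 1 - x := by linarith
  have hD2 {f : ℝ → ℝ} (hf : ContinuousOn f (Icc x 1))
      (hmaps : ∀ z, x ≤ z → z ≤ 1 → 0 ≤ f z ∧ f z ≤ 1) :
      ContinuousOn (fun z => D2 (f z)) (Icc x 1) :=
    continuousOn_D2.comp hf fun z hz => hmaps z hz.1 hz.2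
  have hz0 : ∀ z ∈ Icc x 1, z ≠ 0 := fun z hz => (hx.trans_le hz.1).ne'
  refine (((continuousOn_const.sub (hD2 continuousOn_id ?_)).sub
    (hD2 (continuousOn_const.div continuousOn_id hz0) ?_)).sub (hD2 (by fun_prop) ?_)).add
    (hD2 (ContinuousOn.div (by fun_prop) (by fun_prop) fun z hz =>
      mul_ne_zero (hz0 z hz) h1x.ne') ?_)
  all_goals
    intro z hxz hz1
    have hz : 0 < z := hx.trans_le hxz
    refine ⟨?_, ?_⟩
  · exact hz.le
  · exact hz1
  · exact div_nonneg hx.le hz.le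
  · exact div_le_one_of_le₀ hxz hz.le
  · exact div_nonneg (by linarith) h1x.le
  · exact div_le_one_of_le₀ (by linarith) h1x.le
  · exact div_nonneg (by nlinarith) (by positivity)
  · exact div_le_one_of_le₀ (by nlinarith) (by positivity)

lemma hasDerivAt_D2_comp {f : ℝ → ℝ} {f' z : ℝ} (hf : HasDerivAt f f' z) (h0 : 0 < f z)
    (h1 : f z < 1) : HasDerivAt (fun w => D2 (f w)) (-(1 / 2) * rogersIntegrand (f z) * f') z :=
  (hasDerivAt_D2 h0 h1).comp z hf

lemma hasDerivAt_abelFiveTerm {x z : ℝ} (hx : 0 < x) (hxz : x < z) (hz : z < 1) :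
    HasDerivAt (abelFiveTerm x) 0 z := by
  have hz0 : 0 < z := hx.trans hxz
  have h1x : 0 < 1 - x := by linarith
  have h1z : 0 < 1 - z := by linarith
  have hu2 : HasDerivAt (fun w => x / w) (-x / z ^ 2) z :=
    ((hasDerivAt_const z x).div (hasDerivAt_id' z) hz0.ne').congr_deriv (by ring)
  have hu3 : HasDerivAt (fun w => (1 - w) / (1 - x)) (-1 / (1 - x)) z :=
    ((hasDerivAt_id' z).const_sub 1).div_const (1 - x)
  have hu4 : HasDerivAt (fun w => x * (1 - w) / (w * (1 - x))) (-x / (z ^ 2 * (1 - x))) z :=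
    ((((hasDerivAt_id' z).const_sub 1).const_mul x).div ((hasDerivAt_id' z).mul_const (1 - x))
      (by positivity)).congr_deriv (by field_simp; ring)
  refine ((((hasDerivAt_const z (D2 x)).sub (hasDerivAt_D2 hz0 hz)).sub
    (hasDerivAt_D2_comp hu2 (by positivity) ((div_lt_one hz0).2 hxz))).sub
    (hasDerivAt_D2_comp hu3 (by positivity) ((div_lt_one h1x).2 (by linarith)))).add
    (hasDerivAt_D2_comp hu4 (by positivity) ((div_lt_one (by positivity)).2 (by nlinarith)))
    |>.congr_deriv ?_
  linear_combination (1 / 2) * rogersIntegrand_five_term hx hxz hz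

theorem stmt_11 (x y : ℝ) (hx : 0 < x) (hxy : x < y) (hy : y < 1) :
    D2 x - D2 y - D2 (x/y) - D2 ((1-y)/(1-x)) + D2 (x*(1-y)/(y*(1-x))) = 0 := by
  have hconst := constant_of_has_deriv_right_zero
    ((continuousOn_abelFiveTerm hx (hxy.trans hy)).mono (Icc_subset_Icc_left hxy.le))
    (fun z hz => (hasDerivAt_abelFiveTerm hx (hxy.trans_le hz.1) hz.2).hasDerivWithinAt)
    1 (right_mem_Icc.2 hy.le)
  exact hconst.symm.trans (abelFiveTerm_one x)
end
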